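/- arXiv:2310.11090 — 2 statements merged into one kernel-verified Lean document; each statement's English description precedes it below -/
import Mathlib

section
/- Let I be a nontrivial admissible ideal on ℕ, (s_n) an unbounded I-monotonic increasing positive real sequence, and A, B Lebesgue measurable sets. Write Φ(A) for the set of points x ∈ ℝ such that the sequence λ(A ∩ [x - 1/s_n, x + 1/s_n]) · s_n/2 I-converges to 1. Then Φ(A ∩ B) = Φ(A) ∩ Φ(B). -/
open MeasureTheory Set Filter

/-- `I` is an ideal of subsets of `ℕ`: closed under subsets and finite unions. -/
def IsIdeal (I : Set (Set ℕ)) : Prop :=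
  (∀ ⦃A B : Set ℕ⦄, A ∈ I → B ⊆ A → B ∈ I) ∧
  (∀ ⦃A B : Set ℕ⦄, A ∈ I → B ∈ I → A ∪ B ∈ I)

/-- Admissible ideal: contains all finite sets. -/
def IsAdmissible (I : Set (Set ℕ)) : Prop := ∀ F : Set ℕ, F.Finite → F ∈ I

/-- `I`-convergence of a real sequence to `L`. -/
def IConv (I : Set (Set ℕ)) (u : ℕ → ℝ) (L : ℝ) : Prop :=
  ∀ ε : ℝ, 0 < ε → {n : ℕ | ε ≤ |u n - L|} ∈ I

/-- The sequence of relative measures of `A` in intervals `[x - 1/sₙ, x + 1/sₙ]`. -/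
noncomputable def densSeq (A : Set ℝ) (s : ℕ → ℝ) (x : ℝ) : ℕ → ℝ :=
  fun n => (volume (A ∩ Set.Icc (x - 1 / s n) (x + 1 / s n))).toReal * s n / 2

/-- `x` is an `I_(s)`-density point of `A`. -/
def IDensPt (I : Set (Set ℕ)) (s : ℕ → ℝ) (A : Set ℝ) (x : ℝ) : Prop :=
  IConv I (densSeq A s x) 1

/-- `s` is a positive, unbounded, `I`-monotonic increasing sequence. -/
def IMonoUnbdd (I : Set (Set ℕ)) (s : ℕ → ℝ) : Prop :=
  (∀ n, 0 < s n) ∧ (∀ M : ℝ, ∃ n, M < s n) ∧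
  ∃ k : ℕ → ℕ, StrictMono k ∧ (Set.range k)ᶜ ∈ I ∧ ∀ i, s (k i) ≤ s (k (i + 1))

lemma abs_sub_one {d : ℝ} (h : d ≤ 1) : |d - 1| = 1 - d := by
  rw [abs_sub_comm]; exact abs_of_nonneg (by linarith)

lemma vol_inter_ne_top (A : Set ℝ) (a b : ℝ) :
    volume (A ∩ Set.Icc a b) ≠ ⊤ :=
  ((measure_mono Set.inter_subset_right).trans_lt (by simp [Real.volume_Icc])).ne

lemma densSeq_le_one (A : Set ℝ) (s : ℕ → ℝ) (x : ℝ) (n : ℕ) (hsn : 0 < s n) :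
    densSeq A s x n ≤ 1 := by
  unfold densSeq
  have h1 : (volume (A ∩ Set.Icc (x - 1 / s n) (x + 1 / s n))).toReal ≤ 2 / s n := by
    apply ENNReal.toReal_le_of_le_ofReal (by positivity)
    refine (measure_mono Set.inter_subset_right).trans ?_
    rw [Real.volume_Icc]
    apply ENNReal.ofReal_le_ofReal
    ring_nf
    rfl
  calc (volume (A ∩ Set.Icc (x - 1 / s n) (x + 1 / s n))).toReal * s n / 2
      ≤ (2 / s n) * s n / 2 := by gcongr
    _ = 1 := by field_simp

lemma densSeq_mono {A B : Set ℝ} (hAB : A ⊆ B) (s : ℕ → ℝ) (x : ℝ) (n : ℕ) (hsn : 0 < s n) :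
    densSeq A s x n ≤ densSeq B s x n := by
  unfold densSeq
  have h := ENNReal.toReal_mono (vol_inter_ne_top B (x - 1 / s n) (x + 1 / s n))
    (measure_mono (Set.inter_subset_inter_left _ hAB))
  linarith [mul_le_mul_of_nonneg_right h hsn.le]

lemma densSeq_incl_excl (A B : Set ℝ) (hB : MeasurableSet B) (s : ℕ → ℝ) (x : ℝ) (n : ℕ) :
    densSeq (A ∩ B) s x n + densSeq (A ∪ B) s x n = densSeq A s x n + densSeq B s x n := by
  unfold densSeq
  have key : volume ((A ∪ B) ∩ Set.Icc (x - 1 / s n) (x + 1 / s n)) +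
      volume ((A ∩ B) ∩ Set.Icc (x - 1 / s n) (x + 1 / s n)) =
      volume (A ∩ Set.Icc (x - 1 / s n) (x + 1 / s n)) +
      volume (B ∩ Set.Icc (x - 1 / s n) (x + 1 / s n)) := by
    rw [Set.union_inter_distrib_right, show (A ∩ B) ∩ Set.Icc (x - 1 / s n) (x + 1 / s n)
        = (A ∩ Set.Icc (x - 1 / s n) (x + 1 / s n)) ∩ (B ∩ Set.Icc (x - 1 / s n) (x + 1 / s n))
        by ext y; simp; tauto]
    exact measure_union_add_inter _ (hB.inter measurableSet_Icc)
  have h2 : (volume ((A ∪ B) ∩ Set.Icc (x - 1 / s n) (x + 1 / s n))).toReal +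
      (volume ((A ∩ B) ∩ Set.Icc (x - 1 / s n) (x + 1 / s n))).toReal =
      (volume (A ∩ Set.Icc (x - 1 / s n) (x + 1 / s n))).toReal +
      (volume (B ∩ Set.Icc (x - 1 / s n) (x + 1 / s n))).toReal := by
    rw [← ENNReal.toReal_add (vol_inter_ne_top _ _ _) (vol_inter_ne_top _ _ _),
        ← ENNReal.toReal_add (vol_inter_ne_top _ _ _) (vol_inter_ne_top _ _ _), key]
  linear_combination (s n / 2) * h2

theorem IDensPts_inter (I : Set (Set ℕ)) (hI : IsIdeal I) (hIadm : IsAdmissible I)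
    (hInt : Set.univ ∉ I) (s : ℕ → ℝ) (hs : IMonoUnbdd I s)
    (A B : Set ℝ) (hA : MeasurableSet A) (hB : MeasurableSet B) :
    {x : ℝ | IDensPt I s (A ∩ B) x} = {x : ℝ | IDensPt I s A x} ∩ {x : ℝ | IDensPt I s B x} := by
  obtain ⟨hpos, -, -⟩ := hs
  ext x
  simp only [Set.mem_setOf_eq, Set.mem_inter_iff]
  constructor
  · intro h
    have key : ∀ C : Set ℝ, MeasurableSet C → (A ∩ B) ⊆ C → IDensPt I s C x := by
      intro C _ hC ε hε
      refine hI.1 (h ε hε) ?_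
      intro n hn
      simp only [Set.mem_setOf_eq] at hn ⊢
      have h1 := densSeq_le_one C s x n (hpos n)
      have h2 := densSeq_le_one (A ∩ B) s x n (hpos n)
      have h3 := densSeq_mono hC s x n (hpos n)
      rw [abs_sub_one h1] at hn
      rw [abs_sub_one h2]
      linarith
    exact ⟨key A hA Set.inter_subset_left, key B hB Set.inter_subset_right⟩
  · rintro ⟨hA', hB'⟩ ε hε
    refine hI.1 (hI.2 (hA' (ε/2) (by linarith)) (hB' (ε/2) (by linarith))) ?_
    intro n hn
    simp only [Set.mem_setOf_eq, Set.mem_union] at hn ⊢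
    have h1 := densSeq_le_one A s x n (hpos n)
    have h2 := densSeq_le_one B s x n (hpos n)
    have h3 := densSeq_le_one (A ∩ B) s x n (hpos n)
    have h4 := densSeq_le_one (A ∪ B) s x n (hpos n)
    have h5 := densSeq_incl_excl A B hB s x n
    rw [abs_sub_one h3] at hn
    rw [abs_sub_one h1, abs_sub_one h2]
    by_contra hcon
    push_neg at hcon
    linarith [hcon.1, hcon.2]
end

section
/- Let I be a nontrivial admissible ideal on ℕ, (s_n) an unbounded I-monotonic increasing positive real sequence, A a Lebesgue measurable set, and x ∈ ℝ. Then x is an I_(s)-density point of A if and only if x + t is an I_(s)-density point of A + t, for any t ∈ ℝ, where A + t = {a + t : a ∈ A}. Consequently the I_(s)-density topology is translation invariant. -/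
open MeasureTheory Set Filter

lemma densSeq_translate (A : Set ℝ) (s : ℕ → ℝ) (x t : ℝ) :
    densSeq ((fun a => a + t) '' A) s (x + t) = densSeq A s x := by
  funext n
  unfold densSeq
  congr 2
  have : (fun a => a + t) '' A ∩ Set.Icc (x + t - 1 / s n) (x + t + 1 / s n)
      = (fun a => a + t) '' (A ∩ Set.Icc (x - 1 / s n) (x + 1 / s n)) := by
    ext y
    simp only [Set.mem_inter_iff, Set.mem_image, Set.mem_Icc]
    constructor
    · rintro ⟨⟨a, ha, rfl⟩, h1, h2⟩
      exact ⟨a, ⟨ha, by linarith, by linarith⟩, rfl⟩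
    · rintro ⟨a, ⟨ha, h1, h2⟩, rfl⟩
      exact ⟨⟨a, ha, rfl⟩, by linarith, by linarith⟩
  rw [this]
  have : (fun a => a + t) '' (A ∩ Set.Icc (x - 1 / s n) (x + 1 / s n))
      = (fun a => t + a) '' (A ∩ Set.Icc (x - 1 / s n) (x + 1 / s n)) := by
    simp [add_comm]
  rw [this]
  have := MeasureTheory.measure_preimage_add volume t (A ∩ Set.Icc (x - 1 / s n) (x + 1 / s n))
  rw [show (fun a => t + a) '' (A ∩ Set.Icc (x - 1 / s n) (x + 1 / s n))
      = (fun a => -t + a) ⁻¹' (A ∩ Set.Icc (x - 1 / s n) (x + 1 / s n)) by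
    ext y
    constructor
    · rintro ⟨a, ha, rfl⟩
      simp only [Set.mem_preimage]
      convert ha using 2
      ring
    · intro h; exact ⟨-t + y, h, by ring⟩]
  rw [MeasureTheory.measure_preimage_add]

theorem IDensPt_translate (I : Set (Set ℕ)) (hI : IsIdeal I) (hIadm : IsAdmissible I)
    (hInt : Set.univ ∉ I) (s : ℕ → ℝ) (hs : IMonoUnbdd I s)
    (A : Set ℝ) (hA : MeasurableSet A) (x t : ℝ) :
    (IDensPt I s A x ↔ IDensPt I s ((fun a => a + t) '' A) (x + t)) ∧
    ((A ⊆ {y : ℝ | IDensPt I s A y}) →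
      ((fun a => a + t) '' A ⊆ {y : ℝ | IDensPt I s ((fun a => a + t) '' A) y})) := by
  have key : densSeq ((fun a => a + t) '' A) s (x + t) = densSeq A s x :=
    densSeq_translate A s x t
  have h1 : IDensPt I s A x ↔ IDensPt I s ((fun a => a + t) '' A) (x + t) := by
    unfold IDensPt; rw [key]
  refine ⟨h1, fun hsub => ?_⟩
  rintro y ⟨a, ha, rfl⟩
  have : IDensPt I s A a := hsub ha
  have := densSeq_translate A s a t
  show IDensPt I s ((fun a => a + t) '' A) (a + t)
  unfold IDensPt
  rw [this]
  exact hsub ha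
end
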